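/- arXiv:2601.20653 — 2 statements merged into one kernel-verified Lean document; each statement's English description precedes it below -/
import Mathlib

section
/- (Causality and homogeneity of the multiserver-job queuing system.) Given nondecreasing arrival epochs (T_k)_{m ≤ k ≤ n} and jobs (α_k, σ_k) with 1 ≤ α_k ≤ s and σ_k ≥ 0, the last activity time satisfies X_{[m,n]} ≥ T_n (causality). Moreover, for every c ∈ ℝ, replacing each arrival epoch T_k by T_k + c leaves all workload vectors W_{[m,k]} unchanged and translates the last activity time: X_{[m,n]}(c + T) = X_{[m,n]}(T) + c (homogeneity). -/
/-- The nondecreasing rearrangement operator `R` on vectors of ℝ^s. -/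
noncomputable def sortVec {s : ℕ} (v : Fin s → ℝ) : Fin s → ℝ := v ∘ Tuple.sort v

/-- The all-ones vector `U`. -/
def Uvec (s : ℕ) : Fin s → ℝ := fun _ => 1

/-- `L(α)`: coordinate `i` is `1` if `i ≤ α` and `0` otherwise (indices 0-based,
so `α : Fin s` represents the number of requested servers `α+1 ∈ {1,…,s}`). -/
def Lvec {s : ℕ} (α : Fin s) : Fin s → ℝ := fun i => if i ≤ α then 1 else 0

/-- `S(α, W)`: coordinate `i` is `max (W^α) (W^i)`. -/
def Svec {s : ℕ} (α : Fin s) (W : Fin s → ℝ) : Fin s → ℝ := fun i => max (W α) (W i)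

/-- A vector is ordered if its coordinates are nondecreasing and nonnegative. -/
def IsOrdered {s : ℕ} (W : Fin s → ℝ) : Prop := Monotone W ∧ ∀ i, 0 ≤ W i

/-- The one-step MJSRE map `Φ_{α,σ,τ}(W) = R(S(α,W) + σ·L(α) − τ·U)⁺`. -/
noncomputable def Phi {s : ℕ} (α : Fin s) (σ τ : ℝ) (W : Fin s → ℝ) : Fin s → ℝ :=
  sortVec (fun i => max (Svec α W i + σ * Lvec α i - τ * Uvec s i) 0)

/-- Workload vectors of the multiserver-job system fed by arrival epochs `T` and jobs
`(a k, σf k)` for indices starting at `m`: `Wseq T a σf m j` is the workload vector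
`W_{[m, m+j]}`, i.e. `W_{[m,m]} = 0` and
`W_{[m,k+1]} = Φ_{α_k, σ_k, T_{k+1} − T_k}(W_{[m,k]})`. -/
noncomputable def Wseq {s : ℕ} (T : ℤ → ℝ) (a : ℤ → Fin s) (σf : ℤ → ℝ) (m : ℤ) :
    ℕ → (Fin s → ℝ)
  | 0 => 0
  | j + 1 => Phi (a (m + j)) (σf (m + j)) (T (m + j + 1) - T (m + j)) (Wseq T a σf m j)

/-- The last activity time `X_{[m,n]} = T_n + max (W_{[m,n]}^{α_n} + σ_n, W_{[m,n]}^s)`. -/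
noncomputable def Xlast {s : ℕ} (hs : 0 < s) (T : ℤ → ℝ) (a : ℤ → Fin s) (σf : ℤ → ℝ)
    (m n : ℤ) : ℝ :=
  T n + max (Wseq T a σf m (n - m).toNat (a n) + σf n)
      (Wseq T a σf m (n - m).toNat ⟨s - 1, by omega⟩)


lemma Phi_nonneg {s : ℕ} (α : Fin s) (σ τ : ℝ) (W : Fin s → ℝ) (i : Fin s) :
    0 ≤ Phi α σ τ W i :=
  le_max_right _ _

lemma Wseq_nonneg {s : ℕ} (T : ℤ → ℝ) (a : ℤ → Fin s) (σf : ℤ → ℝ) (m : ℤ) :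
    ∀ (j : ℕ) (i : Fin s), 0 ≤ Wseq T a σf m j i
  | 0, _ => le_rfl
  | _ + 1, i => Phi_nonneg _ _ _ _ i

/-- Only the interarrival times `T (k + 1) - T k` enter the recursion. -/
lemma Wseq_add_const {s : ℕ} (T : ℤ → ℝ) (a : ℤ → Fin s) (σf : ℤ → ℝ) (c : ℝ) (m : ℤ) :
    ∀ j : ℕ, Wseq (fun k => T k + c) a σf m j = Wseq T a σf m j
  | 0 => rfl
  | j + 1 => by
    simp only [Wseq, Wseq_add_const T a σf c m j, add_sub_add_right_eq_sub]

lemma le_Xlast {s : ℕ} (hs : 0 < s) (T : ℤ → ℝ) (a : ℤ → Fin s) (σf : ℤ → ℝ) (m n : ℤ) :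
    T n ≤ Xlast hs T a σf m n :=
  le_add_of_nonneg_right <| (Wseq_nonneg T a σf m _ _).trans (le_max_right _ _)

lemma Xlast_add_const {s : ℕ} (hs : 0 < s) (T : ℤ → ℝ) (a : ℤ → Fin s) (σf : ℤ → ℝ)
    (c : ℝ) (m n : ℤ) :
    Xlast hs (fun k => T k + c) a σf m n = Xlast hs T a σf m n + c := by
  simp only [Xlast, Wseq_add_const]
  ring

theorem mjqm_causality_homogeneity_general (s : ℕ) (hs : 0 < s)
    (T : ℤ → ℝ) (a : ℤ → Fin s) (σf : ℤ → ℝ) :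
    (∀ m n : ℤ, m ≤ n → T n ≤ Xlast hs T a σf m n) ∧
    (∀ c : ℝ, ∀ m : ℤ, ∀ j : ℕ, Wseq (fun k => T k + c) a σf m j = Wseq T a σf m j) ∧
    (∀ c : ℝ, ∀ m n : ℤ, m ≤ n →
      Xlast hs (fun k => T k + c) a σf m n = Xlast hs T a σf m n + c) :=
  ⟨fun m n _ => le_Xlast hs T a σf m n, Wseq_add_const T a σf,
    fun c m n _ => Xlast_add_const hs T a σf c m n⟩

/-- Causality and homogeneity of the multiserver-job queuing system: the last activity
time satisfies `X_{[m,n]} ≥ T_n`; and translating all arrival epochs by a constant `c`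
leaves all workload vectors unchanged and translates the last activity time by `c`. -/
theorem mjqm_causality_homogeneity (s : ℕ) (hs : 0 < s)
    (T : ℤ → ℝ) (hT : Monotone T) (a : ℤ → Fin s) (σf : ℤ → ℝ) (hσ : ∀ k, 0 ≤ σf k) :
    (∀ m n : ℤ, m ≤ n → T n ≤ Xlast hs T a σf m n) ∧
    (∀ c : ℝ, ∀ m : ℤ, ∀ j : ℕ, Wseq (fun k => T k + c) a σf m j = Wseq T a σf m j) ∧
    (∀ c : ℝ, ∀ m n : ℤ, m ≤ n →
      Xlast hs (fun k => T k + c) a σf m n = Xlast hs T a σf m n + c) :=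
  mjqm_causality_homogeneity_general s hs T a σf
end

section
/- (Monotonicity of the specific-resources multiserver-job map.) Fix s ≥ 1, a subset S ⊆ {1,…,s}, an integer α ≥ 1 with α + |S| ≤ s, and σ, τ ≥ 0. Then the SMJSRE one-step map sending an ordered vector W of ℝ^s to R(V(α,S,W) + σ·F(α,S) − τ·U)^+ is coordinatewise nondecreasing on ordered vectors: W ≤ W' implies the images satisfy the same coordinatewise inequality. -/
/-- `k(S,i)`: the number of indices `j ≤ i` not belonging to the specific set `S`. -/
def kcount {s : ℕ} (S : Finset (Fin s)) (i : Fin s) : ℕ :=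
  (Finset.univ.filter (fun j => j ≤ i ∧ j ∉ S)).card

/-- The indicator vector `F(α,S)`: coordinate `i` equals `1` if `i ∈ S` or
(`i ∉ S` and `k(S,i) ≤ α`), and `0` otherwise. -/
def Fvec {s : ℕ} (α : ℕ) (S : Finset (Fin s)) : Fin s → ℝ :=
  fun i => if i ∈ S ∨ (i ∉ S ∧ kcount S i ≤ α) then 1 else 0

/-- The vector `V(α,S,W)`: coordinate `i` equals
`Ŵ = max (max_{j ∈ S} W^j) (W^{i*})` if `i ∈ S` or (`i ∉ S` and `k(S,i) ≤ α`), and `W^i`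
otherwise, where `i*` is the smallest index with `k(S,i*) = α`. -/
noncomputable def Vvec {s : ℕ} (α : ℕ) (S : Finset (Fin s)) (istar : Fin s)
    (W : Fin s → ℝ) : Fin s → ℝ :=
  fun i => if i ∈ S ∨ (i ∉ S ∧ kcount S i ≤ α)
    then (insert istar S).sup' (Finset.insert_nonempty _ _) W
    else W i

/-!
`V(α,S,W)` takes each coordinate of `W` or a maximum of coordinates of `W`, so it is monotone in
`W`, and so are adding `σ·F − τ·U` and taking positive parts. The rearrangement `R` is monotone
because the `j`-th smallest coordinate of `w` is at most `a` iff `j < #{i | w i ≤ a}`, and this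
count can only grow when `w` is decreased.
-/

open Finset

theorem Tuple.comp_sort_mono {n : ℕ} {α : Type*} [LinearOrder α] {v w : Fin n → α}
    (h : v ≤ w) : v ∘ Tuple.sort v ≤ w ∘ Tuple.sort w := by
  intro j
  set a := (w ∘ Tuple.sort w) j
  refine (Tuple.lt_card_le_iff_apply_le_of_monotone (Tuple.monotone_sort v)).1 ?_
  calc (j : ℕ) < #{i | w (Tuple.sort w i) ≤ a} :=
        (Tuple.lt_card_le_iff_apply_le_of_monotone (Tuple.monotone_sort w)).2 le_rfl
    _ = #{i | w i ≤ a} := card_equiv (Tuple.sort w) (by simp)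
    _ ≤ #{i | v i ≤ a} := card_le_card (monotone_filter_right _ fun i _ => (h i).trans)
    _ = #{i | v (Tuple.sort v i) ≤ a} := (card_equiv (Tuple.sort v) (by simp)).symm

theorem monotone_sortVec {s : ℕ} : Monotone (sortVec (s := s)) :=
  fun _ _ => Tuple.comp_sort_mono

theorem monotone_Vvec {s : ℕ} (α : ℕ) (S : Finset (Fin s)) (istar : Fin s) :
    Monotone (Vvec α S istar) := by
  intro W W' hle i
  unfold Vvec
  split
  · exact sup'_mono_fun fun j _ => hle j
  · exact hle i

theorem SMJSRE_mono_general (s : ℕ) (S : Finset (Fin s)) (α : ℕ)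
    (σ τ : ℝ)
    (istar : Fin s)
    (W W' : Fin s → ℝ)
    (hle : ∀ i, W i ≤ W' i) :
    ∀ i, sortVec (fun i' => max (Vvec α S istar W i' + σ * Fvec α S i' - τ) 0) i
      ≤ sortVec (fun i' => max (Vvec α S istar W' i' + σ * Fvec α S i' - τ) 0) i := by
  have hV := monotone_Vvec α S istar hle
  exact monotone_sortVec fun i => max_le_max_right 0 (by linarith [hV i])

/-- Monotonicity of the specific-resources multiserver-job (SMJSRE) one-step map
`W ↦ R(V(α,S,W) + σ·F(α,S) − τ·U)⁺` on ordered vectors. -/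
theorem SMJSRE_mono (s : ℕ) (hs : 0 < s) (S : Finset (Fin s)) (α : ℕ)
    (hα : 1 ≤ α) (hcard : α + S.card ≤ s) (σ τ : ℝ) (hσ : 0 ≤ σ) (hτ : 0 ≤ τ)
    (istar : Fin s) (histar : kcount S istar = α ∧ ∀ i, kcount S i = α → istar ≤ i)
    (W W' : Fin s → ℝ) (hW : IsOrdered W) (hW' : IsOrdered W')
    (hle : ∀ i, W i ≤ W' i) :
    ∀ i, sortVec (fun i' => max (Vvec α S istar W i' + σ * Fvec α S i' - τ) 0) i
      ≤ sortVec (fun i' => max (Vvec α S istar W' i' + σ * Fvec α S i' - τ) 0) i :=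
  SMJSRE_mono_general s S α σ τ istar W W' hle
end
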